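/- arXiv:1403.4708 — 2 statements merged into one kernel-verified Lean document; each statement's English description precedes it below -/
import Mathlib

section
/- Let q be a prime power with q ≡ 4 or 7 (mod 9), let G = SL_3(F_q), and let D be a Sylow 3-subgroup of G. Then D may be chosen inside the group of monomial matrices (matrices with exactly one nonzero entry in each row and column) of determinant 1, and C_G(D) ≤ D. -/
/-- A matrix is monomial if it has exactly one nonzero entry in each row and column. -/
def IsMonomial {F : Type} [Field F] (M : Matrix (Fin 3) (Fin 3) F) : Prop :=
  (∀ i, ∃! j, M i j ≠ 0) ∧ (∀ j, ∃! i, M i j ≠ 0)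

/-!
Let `D` be the group of monomial matrices of determinant one whose permutation is a power of
the 3-cycle and whose entries are cube roots of unity. Since `q ≡ 4, 7 (mod 9)`, the prime `3`
divides `q - 1` and `q² + q + 1` exactly once and does not divide `q (q + 1)`, so the `3`-part of
`|SL₃(q)| = (q - 1)² q³ (q + 1) (q² + q + 1)` is `27 = 3 · 3²`, which is `|D|`. A matrix
centralizing `D` commutes with `diag(1, ω, ω²)`, whose eigenvalues are distinct, so it is
diagonal; commuting with the cyclic permutation matrix makes it scalar, and a scalar matrix of
determinant one is a cube root of unity times `1`, hence lies in `D`.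
-/

open Matrix Equiv Subgroup

namespace Matrix

variable {n R : Type*} [DecidableEq n]

def monomialMatrix [Zero R] (σ : Perm n) (v : n → R) : Matrix n n R :=
  of fun i j => if i = σ j then v j else 0

section Zero

variable [Zero R]

theorem monomialMatrix_apply (σ : Perm n) (v : n → R) (i j : n) :
    monomialMatrix σ v i j = if i = σ j then v j else 0 := rfl

theorem monomialMatrix_injective (σ : Perm n) :
    Function.Injective (monomialMatrix (R := R) σ) :=
  fun v w h => funext fun j => by simpa [monomialMatrix_apply] using congr_fun₂ h (σ j) j

theorem monomialMatrix_apply_ne_zero_iff {σ : Perm n} {v : n → R} (hv : ∀ j, v j ≠ 0)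
    {i j : n} : monomialMatrix σ v i j ≠ 0 ↔ i = σ j := by
  by_cases h : i = σ j <;> simp [monomialMatrix_apply, h, hv]

theorem monomialMatrix_inj {σ τ : Perm n} {v w : n → R} (hv : ∀ j, v j ≠ 0) :
    monomialMatrix σ v = monomialMatrix τ w ↔ σ = τ ∧ v = w := by
  refine ⟨fun h => ?_, fun ⟨hστ, hvw⟩ => hστ ▸ hvw ▸ rfl⟩
  have hστ : σ = τ := Equiv.ext fun j => by
    by_contra hne
    have hσj := (monomialMatrix_apply_ne_zero_iff (i := σ j) (j := j) hv).2 rfl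
    rw [h, monomialMatrix_apply, if_neg hne] at hσj
    exact hσj rfl
  subst hστ
  exact ⟨rfl, monomialMatrix_injective σ h⟩

end Zero

section Semiring

variable [Semiring R]

theorem monomialMatrix_one_eq_diagonal (v : n → R) : monomialMatrix 1 v = diagonal v := by
  ext i j
  by_cases h : i = j <;> simp [monomialMatrix_apply, h]

variable [Fintype n]

theorem monomialMatrix_eq_permMatrix_mul_diagonal (σ : Perm n) (v : n → R) :
    monomialMatrix σ v = σ⁻¹.permMatrix R * diagonal v := by
  ext i j
  simp [monomialMatrix_apply, Perm.permMatrix, PEquiv.toMatrix_apply, Equiv.symm_apply_eq]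

theorem monomialMatrix_mul_monomialMatrix (σ τ : Perm n) (v w : n → R) :
    monomialMatrix σ v * monomialMatrix τ w =
      monomialMatrix (σ * τ) fun j => v (τ j) * w j := by
  ext i j
  rw [mul_apply, Finset.sum_eq_single (τ j) (fun k _ hk => by simp [monomialMatrix_apply, hk])
    (by simp)]
  simp only [monomialMatrix_apply, if_true, ite_mul, zero_mul]
  rfl

end Semiring

variable [Fintype n]

theorem det_monomialMatrix [CommRing R] (σ : Perm n) (v : n → R) :
    (monomialMatrix σ v).det = Perm.sign σ * ∏ i, v i := by
  rw [monomialMatrix_eq_permMatrix_mul_diagonal, det_mul, det_permutation, det_diagonal]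
  simp

theorem ne_zero_of_det_monomialMatrix_eq_one [CommRing R] [IsDomain R] {σ : Perm n}
    {v : n → R} (hdet : (monomialMatrix σ v).det = 1) (j : n) : v j ≠ 0 := by
  rw [det_monomialMatrix] at hdet
  exact Finset.prod_ne_zero_iff.1 (right_ne_zero_of_mul (hdet ▸ one_ne_zero)) j
    (Finset.mem_univ j)

theorem monomialMatrix_mul_monomialMatrix_inv [Field R] (σ : Perm n) {v : n → R}
    (hv : ∀ j, v j ≠ 0) :
    monomialMatrix σ v * monomialMatrix σ⁻¹ (fun j => (v (σ⁻¹ j))⁻¹) = 1 := by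
  rw [monomialMatrix_mul_monomialMatrix, mul_inv_cancel, monomialMatrix_one_eq_diagonal,
    ← diagonal_one]
  exact congr_arg diagonal (funext fun j => mul_inv_cancel₀ (hv _))

theorem eq_diagonal_of_commute_diagonal [CommRing R] [NoZeroDivisors R] {d : n → R}
    (hd : Function.Injective d) {M : Matrix n n R} (h : Commute (diagonal d) M) :
    M = diagonal fun i => M i i := by
  ext i j
  by_cases hij : i = j
  · simp [hij]
  have hM := congr_fun₂ h.eq i j
  rw [diagonal_mul, mul_diagonal] at hM
  have : (d i - d j) * M i j = 0 := by linear_combination hM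
  simpa [hij, sub_eq_zero, hd.ne hij] using this

end Matrix

theorem isMonomial_monomialMatrix {F : Type} [Field F] {σ : Perm (Fin 3)} {v : Fin 3 → F}
    (hv : ∀ j, v j ≠ 0) : IsMonomial (monomialMatrix σ v) := by
  simp_rw [IsMonomial, monomialMatrix_apply_ne_zero_iff hv]
  exact ⟨fun i => ⟨σ.symm i, by simp, fun j hj => by simp [hj]⟩, fun j => existsUnique_eq⟩

namespace Matrix.SpecialLinearGroup

variable {n F : Type*} [Fintype n] [DecidableEq n] [Field F]

def monomialSubgroup (H : Subgroup (Perm n)) (m : ℕ) : Subgroup (SpecialLinearGroup n F) where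
  carrier := {g | ∃ σ ∈ H, ∃ v : n → F, (∀ i, v i ^ m = 1) ∧
    (g : Matrix n n F) = monomialMatrix σ v}
  one_mem' := ⟨1, H.one_mem, 1, fun _ => one_pow m, by simp [monomialMatrix_one_eq_diagonal]⟩
  mul_mem' := by
    rintro _ _ ⟨σ, hσ, v, hv, hg⟩ ⟨τ, hτ, w, hw, hh⟩
    refine ⟨σ * τ, H.mul_mem hσ hτ, fun j => v (τ j) * w j,
      fun j => by rw [mul_pow, hv, hw, one_mul], ?_⟩
    rw [coe_mul, hg, hh, monomialMatrix_mul_monomialMatrix]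
  inv_mem' := by
    rintro g ⟨σ, hσ, v, hv, hg⟩
    have hv0 := ne_zero_of_det_monomialMatrix_eq_one (hg ▸ g.2)
    refine ⟨σ⁻¹, H.inv_mem hσ, fun j => (v (σ⁻¹ j))⁻¹,
      fun j => by rw [inv_pow, hv, inv_one], ?_⟩
    refine left_inv_eq_right_inv ?_ (hg ▸ monomialMatrix_mul_monomialMatrix_inv σ hv0)
    rw [← coe_mul, inv_mul_cancel, coe_one]

variable (F) in
abbrev RootWeights (m : ℕ) (n : Type*) [Fintype n] : Type _ :=
  {v : n → F // (∀ i, v i ^ m = 1) ∧ ∏ i, v i = 1}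

variable {H : Subgroup (Perm n)} {m : ℕ}

def monomialSubgroup.mk (hH : H ≤ alternatingGroup n) (σ : H) (v : RootWeights F m n) :
    monomialSubgroup (F := F) H m :=
  ⟨⟨monomialMatrix σ v, by
      rw [det_monomialMatrix, Perm.mem_alternatingGroup.1 (hH σ.2), v.2.2]
      simp⟩,
    σ, σ.2, v, v.2.1, rfl⟩

@[simp]
theorem coe_monomialSubgroup_mk (hH : H ≤ alternatingGroup n) (σ : H) (v : RootWeights F m n) :
    ((monomialSubgroup.mk hH σ v : SpecialLinearGroup n F) : Matrix n n F) =
      monomialMatrix σ v :=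
  rfl

theorem monomialSubgroup.mk_bijective (hH : H ≤ alternatingGroup n) :
    Function.Bijective fun p : H × RootWeights F m n => monomialSubgroup.mk hH p.1 p.2 := by
  constructor
  · rintro ⟨σ, v⟩ ⟨τ, w⟩ h
    have hv0 := ne_zero_of_det_monomialMatrix_eq_one (monomialSubgroup.mk hH σ v).1.2
    obtain ⟨hστ, hvw⟩ := (monomialMatrix_inj hv0).1
      (congr_arg (fun g => ((g.1 : SpecialLinearGroup n F) : Matrix n n F)) h)
    ext1
    exacts [Subtype.ext hστ, Subtype.ext hvw]
  · rintro ⟨g, σ, hσ, v, hv, hg⟩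
    have hdet := hg ▸ g.2
    rw [det_monomialMatrix, Perm.mem_alternatingGroup.1 (hH hσ)] at hdet
    exact ⟨(⟨σ, hσ⟩, ⟨v, hv, by simpa using hdet⟩), Subtype.ext (Subtype.ext hg.symm)⟩

theorem card_monomialSubgroup (hH : H ≤ alternatingGroup n) :
    Nat.card (monomialSubgroup (F := F) H m) = Nat.card H * Nat.card (RootWeights F m n) := by
  rw [← Nat.card_prod, Nat.card_congr (Equiv.ofBijective _ (monomialSubgroup.mk_bijective hH))]

end Matrix.SpecialLinearGroup

theorem IsPrimitiveRoot.card_subtype_pow_eq_one {R : Type*} [CommRing R] [IsDomain R] {ω : R}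
    {m : ℕ} (hω : IsPrimitiveRoot ω m) (hm : 0 < m) :
    Nat.card {x : R // x ^ m = 1} = m := by
  classical
  rw [Nat.subtype_card _ fun x => Polynomial.mem_nthRootsFinset hm 1, hω.card_nthRootsFinset]

theorem FiniteField.exists_isPrimitiveRoot_of_dvd_card_sub_one {F : Type*} [Field F]
    [Fintype F] {n : ℕ} (hn : n ∣ Fintype.card F - 1) : ∃ ω : F, IsPrimitiveRoot ω n := by
  classical
  obtain ⟨g, hg⟩ := IsCyclic.exists_ofOrder_eq_natCard (α := Fˣ)
  rw [Nat.card_eq_fintype_card, Fintype.card_units] at hg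
  obtain ⟨k, hk⟩ := hn
  have hk0 : k ≠ 0 := by
    rintro rfl
    have := Fintype.one_lt_card (α := F)
    omega
  have hgk := (IsPrimitiveRoot.coe_units_iff.2 (hg ▸ IsPrimitiveRoot.orderOf g)).pow_of_dvd hk0
    (hk ▸ dvd_mul_left k n)
  rw [hk, Nat.mul_div_cancel _ (Nat.pos_of_ne_zero hk0)] at hgk
  exact ⟨_, hgk⟩

theorem Matrix.card_specialLinearGroup_mul_card_sub_one {n F : Type*} [Fintype n]
    [DecidableEq n] [Nonempty n] [Field F] [Fintype F] :
    Nat.card (SpecialLinearGroup n F) * (Fintype.card F - 1) = Nat.card (GL n F) := by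
  classical
  have hrange : SpecialLinearGroup.toGL.range =
      (GeneralLinearGroup.det : GL n F →* Fˣ).ker := by
    ext x
    simpa [Units.ext_iff] using Set.ext_iff.1 SpecialLinearGroup.range_toGL x
  rw [Nat.card_congr (MonoidHom.ofInjective SpecialLinearGroup.toGL_injective).toEquiv, hrange,
    ← Fintype.card_units, ← Nat.card_eq_fintype_card, ← Subgroup.card_top (G := Fˣ),
    ← MonoidHom.range_eq_top_of_surjective _ (GeneralLinearGroup.det_surjective (n := n)),
    ← Subgroup.index_ker, Subgroup.card_mul_index]

theorem Matrix.card_specialLinearGroup_fin_three (F : Type*) [Field F] [Fintype F] :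
    Nat.card (SpecialLinearGroup (Fin 3) F) = (Fintype.card F - 1) ^ 2 * Fintype.card F ^ 3 *
      (Fintype.card F + 1) * (Fintype.card F ^ 2 + Fintype.card F + 1) := by
  classical
  have hGL := card_specialLinearGroup_mul_card_sub_one (n := Fin 3) (F := F)
  rw [card_GL_field, Fin.prod_univ_three] at hGL
  obtain ⟨k, hk⟩ : ∃ k, Fintype.card F = k + 2 :=
    ⟨Fintype.card F - 2, by have := Fintype.one_lt_card (α := F); omega⟩
  rw [hk] at hGL ⊢
  refine Nat.eq_of_mul_eq_mul_right (show 0 < k + 2 - 1 by omega) (hGL.trans ?_)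
  simp only [Fin.val_zero, Fin.val_one, Fin.val_two]
  have hle : ∀ i ≤ 3, (k + 2) ^ i ≤ (k + 2) ^ 3 := fun i hi =>
    Nat.pow_le_pow_right (by omega) hi
  zify [hle 0 (by norm_num), hle 1 (by norm_num), hle 2 (by norm_num), (by omega : 1 ≤ k + 2)]
  ring

theorem Nat.factorization_three_eq_one_of_mod_nine {n : ℕ} (h : n % 9 = 3 ∨ n % 9 = 6) :
    n.factorization 3 = 1 := by
  obtain ⟨t, rfl⟩ : 3 ∣ n := by omega
  rw [Nat.factorization_mul (by norm_num) (by omega), Finsupp.add_apply,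
    Nat.prime_three.factorization_self, Nat.factorization_eq_zero_of_not_dvd (by omega)]

theorem Nat.factorization_three_sl_three_order {q : ℕ} (hq : q % 9 = 4 ∨ q % 9 = 7) :
    ((q - 1) ^ 2 * q ^ 3 * (q + 1) * (q ^ 2 + q + 1)).factorization 3 = 3 := by
  have hq2 : (q ^ 2 + q + 1) % 9 = 3 := by
    rcases hq with h | h <;> simp [Nat.add_mod, Nat.pow_mod, h]
  have hq0 : q ≠ 0 := by omega
  have hq1 : q - 1 ≠ 0 := by omega
  rw [Nat.factorization_mul (by simp [hq0, hq1]) (by positivity),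
    Nat.factorization_mul (by simp [hq0, hq1]) (by positivity),
    Nat.factorization_mul (by simp [hq1]) (by positivity),
    Nat.factorization_pow, Nat.factorization_pow]
  simp only [Finsupp.add_apply, Finsupp.smul_apply, smul_eq_mul]
  rw [factorization_three_eq_one_of_mod_nine (n := q - 1) (by omega),
    factorization_three_eq_one_of_mod_nine (Or.inl hq2),
    Nat.factorization_eq_zero_of_not_dvd (by omega : ¬ 3 ∣ q),
    Nat.factorization_eq_zero_of_not_dvd (by omega : ¬ 3 ∣ q + 1)]

theorem Fin.apply_eq_apply_zero_of_comp_finRotate {n : ℕ} {α : Type*} {w : Fin (n + 1) → α}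
    (hw : ∀ j, w (finRotate (n + 1) j) = w j) (j : Fin (n + 1)) : w j = w 0 := by
  induction j using Fin.induction with
  | zero => rfl
  | succ i ih => rw [← ih, ← hw i.castSucc, finRotate_apply, Fin.coeSucc_eq_succ]

namespace Matrix.SpecialLinearGroup

variable {F : Type*} [Field F]

def rootWeightsFinThreeEquiv {m : ℕ} (hm : m ≠ 0) :
    RootWeights F m (Fin 3) ≃ {x : F // x ^ m = 1} × {x : F // x ^ m = 1} where
  toFun v := (⟨v.1 0, v.2.1 0⟩, ⟨v.1 1, v.2.1 1⟩)
  invFun p := ⟨![p.1, p.2, (p.1 * p.2 : F)⁻¹], fun i => by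
      fin_cases i <;> simp [p.1.2, p.2.2, mul_pow, inv_pow], by
    have h1 : (p.1 : F) ≠ 0 := (pow_ne_zero_iff hm).1 (by rw [p.1.2]; exact one_ne_zero)
    have h2 : (p.2 : F) ≠ 0 := (pow_ne_zero_iff hm).1 (by rw [p.2.2]; exact one_ne_zero)
    simp only [Fin.prod_univ_three]
    exact mul_inv_cancel₀ (mul_ne_zero h1 h2)⟩
  left_inv v := by
    have hv : v.1 0 * v.1 1 * v.1 2 = 1 := by simpa [Fin.prod_univ_three] using v.2.2
    ext i
    fin_cases i
    · rfl
    · rfl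
    · exact inv_eq_of_mul_eq_one_right hv
  right_inv _ := rfl

theorem card_rootWeights_fin_three {m : ℕ} {ω : F} (hω : IsPrimitiveRoot ω m) (hm : 0 < m) :
    Nat.card (RootWeights F m (Fin 3)) = m ^ 2 := by
  rw [Nat.card_congr (rootWeightsFinThreeEquiv hm.ne'), Nat.card_prod,
    hω.card_subtype_pow_eq_one hm, sq]

theorem zpowers_finRotate_three_le_alternatingGroup :
    zpowers (finRotate 3) ≤ alternatingGroup (Fin 3) :=
  zpowers_le.2 (Perm.mem_alternatingGroup.2 (by decide))

theorem centralizer_monomialSubgroup_finRotate_three_le {ω : F} (hω : IsPrimitiveRoot ω 3) :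
    centralizer
        (monomialSubgroup (F := F) (zpowers (finRotate 3)) 3 : Set (SpecialLinearGroup (Fin 3) F))
      ≤ monomialSubgroup (zpowers (finRotate 3)) 3 := by
  let mk := monomialSubgroup.mk (F := F) (m := 3) zpowers_finRotate_three_le_alternatingGroup
  let diag := mk 1 ⟨fun i => ω ^ (i : ℕ),
    fun i => by rw [← pow_mul, mul_comm, pow_mul, hω.pow_eq_one, one_pow],
    by simp [Fin.prod_univ_three, ← pow_succ', hω.pow_eq_one]⟩
  let cyc := mk ⟨finRotate 3, mem_zpowers _⟩ ⟨1, by simp, by simp⟩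
  intro g hg
  have hcomm : ∀ h : SpecialLinearGroup (Fin 3) F,
      h ∈ monomialSubgroup (zpowers (finRotate 3)) 3 →
      Commute (h : Matrix (Fin 3) (Fin 3) F) g := fun h hh => by
    have := congr_arg (fun x : SpecialLinearGroup (Fin 3) F => (x : Matrix (Fin 3) (Fin 3) F))
      (hg h hh)
    simp only [coe_mul] at this
    exact this
  set M : Matrix (Fin 3) (Fin 3) F := ↑g
  have hdiag : M = diagonal fun i => M i i := by
    refine eq_diagonal_of_commute_diagonal (d := fun i : Fin 3 => ω ^ (i : ℕ)) ?_ ?_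
    · exact fun i j hij => Fin.ext (hω.pow_inj i.2 j.2 hij)
    · simpa [diag, mk, monomialMatrix_one_eq_diagonal] using hcomm _ diag.2
  have hconst : ∀ j, M j j = M 0 0 := by
    refine Fin.apply_eq_apply_zero_of_comp_finRotate fun j => ?_
    have := (hcomm _ cyc.2).eq
    simp only [cyc, mk, coe_monomialSubgroup_mk] at this
    rw [hdiag, ← monomialMatrix_one_eq_diagonal, monomialMatrix_mul_monomialMatrix,
      monomialMatrix_mul_monomialMatrix, mul_one, one_mul] at this
    simpa using (congr_fun (monomialMatrix_injective _ this) j).symm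
  have hscalar : M = monomialMatrix 1 fun _ => M 0 0 := by
    rw [monomialMatrix_one_eq_diagonal, ← funext hconst]
    exact hdiag
  have hdet : M.det = 1 := g.2
  rw [hscalar, det_monomialMatrix] at hdet
  exact ⟨1, one_mem _, fun _ => M 0 0, fun _ => by simpa using hdet, hscalar⟩

end Matrix.SpecialLinearGroup

open Matrix.SpecialLinearGroup in
/-- Let `q` be a prime power with `q ≡ 4` or `7 (mod 9)` and `G = SL₃(F_q)`. Then a Sylow
3-subgroup `D` of `G` may be chosen inside the monomial matrices of determinant 1,
and it satisfies `C_G(D) ≤ D`. -/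
theorem sl3_sylow_three_monomial_self_centralizing (F : Type) [Field F] [Fintype F]
    (hq : Fintype.card F % 9 = 4 ∨ Fintype.card F % 9 = 7) :
    ∃ P : Sylow 3 (Matrix.SpecialLinearGroup (Fin 3) F),
      (∀ g : Matrix.SpecialLinearGroup (Fin 3) F, g ∈ (P : Subgroup _) →
        IsMonomial (g : Matrix (Fin 3) (Fin 3) F)) ∧
      Subgroup.centralizer ((P : Subgroup (Matrix.SpecialLinearGroup (Fin 3) F)) : Set _)
        ≤ (P : Subgroup (Matrix.SpecialLinearGroup (Fin 3) F)) := by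
  obtain ⟨ω, hω⟩ := FiniteField.exists_isPrimitiveRoot_of_dvd_card_sub_one (F := F) (n := 3)
    (by omega)
  have hcard : Nat.card (monomialSubgroup (F := F) (zpowers (finRotate 3)) 3) =
      3 ^ (Nat.card (SpecialLinearGroup (Fin 3) F)).factorization 3 := by
    rw [card_monomialSubgroup zpowers_finRotate_three_le_alternatingGroup, Nat.card_zpowers,
      orderOf_eq_prime (p := 3) (by decide) (by decide), card_rootWeights_fin_three hω three_pos,
      card_specialLinearGroup_fin_three, Nat.factorization_three_sl_three_order hq]
    norm_num
  refine ⟨Sylow.ofCard _ hcard, ?_, centralizer_monomialSubgroup_finRotate_three_le hω⟩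
  rintro g ⟨σ, -, v, -, hg⟩
  rw [hg]
  exact isMonomial_monomialMatrix (ne_zero_of_det_monomialMatrix_eq_one (hg ▸ g.2))
end

section
/- Let G̃ be a finite group, J ⊴ G̃, G ≤ J normal in G̃, ℓ a prime, B an ℓ-block of J with defect group D. If C_{G̃}(C_J(D)_{ℓ'}) · G = G̃, where C_J(D)_{ℓ'} denotes the set of ℓ-regular elements of C_J(D), then B is G̃-stable, i.e., B^g = B for all g ∈ G̃. -/
/-- `e` is a block idempotent of the group algebra `k[G]`: a nonzero primitive idempotent
of the center of `k[G]`. -/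
def IsBlockIdem (k : Type) [Field k] (G : Type) [Group G] (e : MonoidAlgebra k G) : Prop :=
  e ∈ Subalgebra.center k (MonoidAlgebra k G) ∧ e * e = e ∧ e ≠ 0 ∧
    ∀ f : MonoidAlgebra k G, f ∈ Subalgebra.center k (MonoidAlgebra k G) → f * f = f →
      e * f = f → f = 0 ∨ f = e

/-- The Brauer homomorphism with respect to `Q` (truncation of the coefficients to the
centralizer `C_G(Q)`) does not vanish on `e`. -/
def BrauerNonzero {k : Type} [Field k] {G : Type} [Group G]
    (Q : Subgroup G) (e : MonoidAlgebra k G) : Prop :=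
  ∃ g ∈ Subgroup.centralizer (Q : Set G), e.coeff g ≠ 0

/-- `D` is a defect group of the block `e`: an `ℓ`-subgroup maximal among `ℓ`-subgroups
on which the Brauer homomorphism does not kill `e`. -/
def IsDefectGroup {k : Type} [Field k] {G : Type} [Group G]
    (ℓ : ℕ) (e : MonoidAlgebra k G) (D : Subgroup G) : Prop :=
  IsPGroup ℓ ↥D ∧ BrauerNonzero D e ∧
    ∀ Q : Subgroup G, IsPGroup ℓ ↥Q → BrauerNonzero Q e → D ≤ Q → Q = D

/-- The conjugation action of `g ∈ G̃` on the group algebra of a normal subgroup `J`. -/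
noncomputable def conjBlock {k : Type} [Field k] {Gt : Type} [Group Gt]
    (J : Subgroup Gt) [hJ : J.Normal] (g : Gt)
    (e : MonoidAlgebra k ↥J) : MonoidAlgebra k ↥J :=
  MonoidAlgebra.ofCoeff
    (Finsupp.mapDomain (fun x : ↥J => (⟨g * ↑x * g⁻¹, hJ.conj_mem ↑x x.2 g⟩ : ↥J)) e.coeff)

/-!
The stabilizer of the block `e` in `G̃` is a subgroup. It contains `J`, since `e` is central,
and hence `G`. It also contains every `c` centralizing `C_J(D)_{ℓ'}`: then `e^c` is again a
block idempotent and agrees with `e` on the `ℓ`-regular elements of `C_J(D)`, hence on all of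
`C_J(D)`, because block idempotents vanish on `ℓ`-singular elements (Osima). For central
elements, the coefficient of a product at `x ∈ C_J(D)` only sees the coefficients of the
factors on `C_J(D)` (the other terms come in `D`-orbits of size divisible by `ℓ`), so
`e = e * e` and `e * e^c` agree on `C_J(D)`. If `e^c ≠ e`, then `e * e^c = 0`, contradicting
`Br_D(e) ≠ 0`.
-/

open scoped Nat

open MulAction in
theorem IsPGroup.sum_eq_zero_of_forall_fixedPoints {p : ℕ} [Fact p.Prime] {G α k : Type*}
    [Group G] [MulAction G α] [Fintype α] [Semiring k] [CharP k p] (hG : IsPGroup p G)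
    {f : α → k} (hf : ∀ (g : G) x, f (g • x) = f x) (h0 : ∀ x ∈ fixedPoints G α, f x = 0) :
    ∑ x, f x = 0 := by
  classical
  rw [Finset.sum_comp (fun v : k => v) f]
  refine Finset.sum_eq_zero fun v _ => ?_
  rcases eq_or_ne v 0 with rfl | hv
  · exact smul_zero _
  let fiber : SubMulAction G α :=
    { carrier := {x | f x = v}, smul_mem' := fun g x hx => (hf g x).trans hx }
  have hfix : IsEmpty (fixedPoints G fiber) := by
    refine ⟨fun ⟨⟨x, hx⟩, hfix⟩ => hv ?_⟩
    rw [← hx, h0 x fun g => congrArg Subtype.val (hfix g)]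
  have hdvd : p ∣ Nat.card fiber := Nat.modEq_zero_iff_dvd.mp <|
    (hG.card_modEq_card_fixedPoints fiber).trans (by rw [Nat.card_of_isEmpty])
  rw [Nat.card_eq_fintype_card, Fintype.card_subtype] at hdvd
  change p ∣ (Finset.univ.filter fun x => f x = v).card at hdvd
  rw [nsmul_eq_mul, (CharP.cast_eq_zero_iff k p _).mpr hdvd, zero_mul]

theorem Equiv.Perm.apply_zpow_apply_eq {α β : Type*} {π : Equiv.Perm α} {f : α → β}
    (h : ∀ x, f (π x) = f x) (j : ℤ) (x : α) : f ((π ^ j) x) = f x := by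
  induction j using Int.induction_on generalizing x with
  | zero => rfl
  | succ i ih => rw [zpow_add_one, Equiv.Perm.mul_apply, ih, h]
  | pred i ih =>
    rw [zpow_sub_one, Equiv.Perm.mul_apply, ih]
    simpa using (h (π⁻¹ x)).symm

theorem Equiv.Perm.sum_eq_zero_of_pow_eq_one {p : ℕ} [Fact p.Prime] {α k : Type*} [Fintype α]
    [Semiring k] [CharP k p] {π : Equiv.Perm α} {m : ℕ} (hπ : π ^ p ^ m = 1) {f : α → k}
    (hf : ∀ x, f (π x) = f x) (h0 : ∀ x, π x = x → f x = 0) : ∑ x, f x = 0 := by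
  have hP : IsPGroup p (Subgroup.zpowers π) := by
    rintro ⟨_, j, rfl⟩
    refine ⟨m, Subtype.ext ?_⟩
    change (π ^ j) ^ p ^ m = 1
    rw [← zpow_natCast, ← zpow_mul, mul_comm, zpow_mul, zpow_natCast, hπ, one_zpow]
  refine hP.sum_eq_zero_of_forall_fixedPoints ?_ fun x hx => h0 x (hx ⟨π, Subgroup.mem_zpowers π⟩)
  rintro ⟨_, j, rfl⟩ x
  exact apply_zpow_apply_eq hf j x

theorem Nat.exists_pow_totient_eq_one_add_mul {d n : ℕ} (hdn : d.Coprime n) (hd : 0 < d) :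
    ∃ s, d ^ φ n = 1 + n * s := by
  have hpos : 1 ≤ d ^ φ n := Nat.one_le_pow _ _ hd
  obtain ⟨s, hs⟩ := (Nat.modEq_iff_dvd' hpos).mp (Nat.ModEq.pow_totient hdn).symm
  exact ⟨s, by omega⟩

theorem List.prod_ofFn_conj_pow {H : Type*} [Group H] (x z : H) (n : ℕ) :
    (List.ofFn fun i : Fin n => z ^ (i : ℕ) * x * (z ^ (i : ℕ))⁻¹).prod =
      (x * z) ^ n * (z ^ n)⁻¹ := by
  induction n with
  | zero => simp
  | succ n ih =>
    rw [List.ofFn_succ', List.prod_concat]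
    simp only [Fin.val_castSucc, Fin.val_last, ih]
    rw [pow_succ (x * z), pow_succ z]
    group

section TwistedShift

variable {H : Type*} [Group H] {n : ℕ} [NeZero n] (y : H)

/-- `twistedShift y` sends `(σ₀, …, σₙ₋₁)` to `(σ₁, …, σₙ₋₁, y⁻¹ σ₀ y)`, a rotation twisted so as
to preserve the tuples with product `y`. Its iterates are shifts of the twisted-periodic
extension `twistedExtend y σ`, which satisfies `τ (m + n) = y⁻¹ * τ m * y`. -/
def twistedExtend (σ : Fin n → H) (m : ℕ) : H :=
  (y ^ (m / n))⁻¹ * σ (Fin.ofNat n m) * y ^ (m / n)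

def twistedShift (σ : Fin n → H) : Fin n → H :=
  fun i => twistedExtend y σ (i + 1)

variable {y}

theorem twistedExtend_of_lt (σ : Fin n → H) {m : ℕ} (hm : m < n) :
    twistedExtend y σ m = σ ⟨m, hm⟩ := by
  have hidx : Fin.ofNat n m = ⟨m, hm⟩ := Fin.ext (Nat.mod_eq_of_lt hm)
  rw [twistedExtend, Nat.div_eq_of_lt hm, hidx, pow_zero, inv_one, one_mul, mul_one]

theorem twistedExtend_add_mul (σ : Fin n → H) (m c : ℕ) :
    twistedExtend y σ (m + n * c) = (y ^ c)⁻¹ * twistedExtend y σ m * y ^ c := by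
  have hidx : Fin.ofNat n (m + n * c) = Fin.ofNat n m := by simp [Fin.ext_iff]
  simp only [twistedExtend, Nat.add_mul_div_left _ _ (NeZero.pos n), hidx, pow_add]
  group

theorem twistedExtend_twistedShift (σ : Fin n → H) (m : ℕ) :
    twistedExtend y (twistedShift y σ) m = twistedExtend y σ (m + 1) := by
  have hm : m + 1 = (m % n + 1) + n * (m / n) := by
    have := Nat.mod_add_div m n
    omega
  rw [hm, twistedExtend_add_mul]
  simp [twistedExtend, twistedShift]

theorem twistedExtend_iterate_twistedShift (σ : Fin n → H) (j m : ℕ) :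
    twistedExtend y ((twistedShift y)^[j] σ) m = twistedExtend y σ (m + j) := by
  induction j generalizing σ with
  | zero => rfl
  | succ j ih =>
    rw [Function.iterate_succ_apply, ih, twistedExtend_twistedShift, add_assoc]

theorem iterate_twistedShift_apply (σ : Fin n → H) (j : ℕ) (i : Fin n) :
    (twistedShift y)^[j] σ i = twistedExtend y σ (i + j) := by
  rw [← twistedExtend_iterate_twistedShift, twistedExtend_of_lt _ i.isLt]

theorem iterate_twistedShift_mul (σ : Fin n → H) (c : ℕ) :
    (twistedShift y)^[n * c] σ = fun i => (y ^ c)⁻¹ * σ i * y ^ c := by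
  ext i
  rw [iterate_twistedShift_apply, twistedExtend_add_mul, twistedExtend_of_lt _ i.isLt]

theorem prod_ofFn_twistedShift_eq_iff (σ : Fin n → H) :
    (List.ofFn (twistedShift y σ)).prod = y ↔ (List.ofFn σ).prod = y := by
  suffices h : (List.ofFn (twistedShift y σ)).prod =
      (σ 0)⁻¹ * (List.ofFn σ).prod * (y⁻¹ * σ 0 * y) by
    rw [h]
    constructor
    · intro h
      calc (List.ofFn σ).prod
          = σ 0 * ((σ 0)⁻¹ * (List.ofFn σ).prod * (y⁻¹ * σ 0 * y)) * (y⁻¹ * σ 0 * y)⁻¹ := by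
            group
        _ = y := by rw [h]; group
    · intro h
      rw [h]
      group
  obtain ⟨m, rfl⟩ : ∃ m, n = m + 1 := Nat.exists_eq_succ_of_ne_zero (NeZero.ne n)
  have hlast : twistedShift y σ (Fin.last m) = y⁻¹ * σ 0 * y := by
    simpa [twistedShift, twistedExtend_of_lt] using twistedExtend_add_mul (y := y) σ 0 1
  have hinit (i : Fin m) : twistedShift y σ i.castSucc = σ i.succ := by
    simp [twistedShift, twistedExtend_of_lt σ (Nat.succ_lt_succ i.isLt), Fin.succ]
  rw [List.ofFn_succ', List.prod_concat, List.ofFn_succ, List.prod_cons, hlast]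
  simp only [hinit]
  group

theorem prod_twistedShift {M : Type*} [CommMonoid M] {f : H → M}
    (hf : ∀ a b, f (a * b * a⁻¹) = f b) (σ : Fin n → H) :
    ∏ i, f (twistedShift y σ i) = ∏ i, f (σ i) := by
  have hconj (i : Fin n) : f (twistedShift y σ i) = f (σ (i + 1)) := by
    have hidx : Fin.ofNat n (i + 1) = i + 1 := by ext; simp [Fin.val_add]
    rw [twistedShift, twistedExtend, hidx]
    simpa using hf (y ^ (((i : ℕ) + 1) / n))⁻¹ (σ (i + 1))
  simp only [hconj]
  exact Fintype.prod_equiv (Equiv.addRight 1) _ _ fun _ => rfl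

theorem pow_eq_of_iterate_twistedShift_eq_self {σ : Fin n → H} {s : ℕ}
    (hσ : (twistedShift y)^[1 + n * s] σ = σ) (hprod : (List.ofFn σ).prod = y) :
    (σ 0 * y ^ s) ^ n = y ^ (1 + n * s) := by
  have hstep (j : ℕ) (hj : j < n) :
      twistedExtend y σ (j + 1) = y ^ s * σ ⟨j, hj⟩ * (y ^ s)⁻¹ := by
    have h := congrFun hσ ⟨j, hj⟩
    rw [iterate_twistedShift_apply, ← add_assoc, twistedExtend_add_mul] at h
    rw [← h]
    group
  have hconj (j : ℕ) (hj : j < n) : σ ⟨j, hj⟩ = (y ^ s) ^ j * σ 0 * ((y ^ s) ^ j)⁻¹ := by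
    induction j with
    | zero => simp
    | succ j ih =>
      rw [← twistedExtend_of_lt σ hj, hstep j (by omega), ih, pow_succ']
      group
  have hσ' : σ = fun i : Fin n => (y ^ s) ^ (i : ℕ) * σ 0 * ((y ^ s) ^ (i : ℕ))⁻¹ :=
    funext fun i => hconj i i.isLt
  have h : (List.ofFn σ).prod = (σ 0 * y ^ s) ^ n * ((y ^ s) ^ n)⁻¹ := by
    conv_lhs => rw [hσ']
    exact List.prod_ofFn_conj_pow _ _ _
  rw [hprod, eq_mul_inv_iff_mul_eq] at h
  rw [pow_add, pow_one, pow_mul', h]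

theorem iterate_twistedShift_mul_orderOf (y : H) :
    (twistedShift y)^[n * orderOf y] = @id (Fin n → H) := by
  funext σ
  rw [iterate_twistedShift_mul, pow_orderOf_eq_one]
  simp

variable [Finite H]

noncomputable def twistedShiftPerm (y : H) : Equiv.Perm (Fin n → H) where
  toFun := twistedShift y
  invFun := (twistedShift y)^[(n * orderOf y).pred]
  left_inv σ := by
    rw [← Function.iterate_succ_apply,
      Nat.succ_pred_eq_of_pos (Nat.mul_pos (NeZero.pos n) (orderOf_pos y)),
      iterate_twistedShift_mul_orderOf, id]
  right_inv σ := by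
    rw [← Function.iterate_succ_apply' (f := twistedShift y),
      Nat.succ_pred_eq_of_pos (Nat.mul_pos (NeZero.pos n) (orderOf_pos y)),
      iterate_twistedShift_mul_orderOf, id]

theorem coe_twistedShiftPerm_pow (y : H) (m : ℕ) :
    ⇑(twistedShiftPerm y ^ m : Equiv.Perm (Fin n → H)) = (twistedShift y)^[m] :=
  Equiv.Perm.coe_pow _ _

theorem twistedShiftPerm_pow_mul_eq_one {c : ℕ} (hc : y ^ c = 1) :
    (twistedShiftPerm y ^ (n * c) : Equiv.Perm (Fin n → H)) = 1 := by
  ext σ : 1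
  simp [coe_twistedShiftPerm_pow, iterate_twistedShift_mul, hc]

end TwistedShift

namespace MonoidAlgebra

variable {k H : Type*} [Group H]

theorem coeff_conj_eq_of_mem_center [CommSemiring k] {e : MonoidAlgebra k H}
    (he : e ∈ Subalgebra.center k (MonoidAlgebra k H)) (a b : H) :
    e.coeff (a * b * a⁻¹) = e.coeff b := by
  have hcomm := congrArg (fun f => f.coeff (a * b)) <|
    Subalgebra.mem_center_iff.mp he (single a 1)
  simpa using hcomm.symm

theorem coeff_mul_eq_sum [Semiring k] [Fintype H] (a b : MonoidAlgebra k H) (y : H) :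
    (a * b).coeff y = ∑ u, a.coeff u * b.coeff (u⁻¹ * y) := by
  rw [coeff_mul_apply_left, Finsupp.sum_fintype _ _ fun _ => zero_mul _]

open scoped Classical in
theorem coeff_pow_eq_sum [CommSemiring k] [Fintype H] (f : MonoidAlgebra k H) (n : ℕ) (y : H) :
    (f ^ n).coeff y =
      ∑ σ : Fin n → H, if (List.ofFn σ).prod = y then ∏ i, f.coeff (σ i) else 0 := by
  induction n generalizing y with
  | zero => simp [one_def, Finsupp.single_apply, eq_comm]
  | succ n ih =>
    rw [pow_succ', coeff_mul_eq_sum, ← (Fin.consEquiv fun _ => H).sum_comp,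
      Fintype.sum_prod_type]
    refine Finset.sum_congr rfl fun u _ => ?_
    simp only [ih, Finset.mul_sum, mul_ite, mul_zero, Fin.consEquiv_apply, List.ofFn_succ,
      Fin.cons_zero, Fin.cons_succ, List.prod_cons, Fin.prod_univ_succ, eq_inv_mul_iff_mul_eq]

theorem domCongr_mem_center [CommSemiring k] {a : MonoidAlgebra k H}
    (ha : a ∈ Subalgebra.center k _) (ψ : H ≃* H) :
    domCongr k k ψ a ∈ Subalgebra.center k (MonoidAlgebra k H) := by
  rw [Subalgebra.mem_center_iff] at ha ⊢
  intro b
  rw [← (domCongr k k ψ).apply_symm_apply b, ← map_mul, ← map_mul, ha]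

theorem domCongr_conj_eq_self [CommSemiring k] {a : MonoidAlgebra k H}
    (ha : a ∈ Subalgebra.center k _) (g : H) : domCongr k k (MulAut.conj g) a = a := by
  ext x : 2
  simpa [coeff_domCongr] using coeff_conj_eq_of_mem_center ha g⁻¹ x

/-- Osima: central idempotents of `k[H]` vanish on `ℓ`-singular elements. With `n` the `ℓ`-part
and `d` the `ℓ'`-part of `|H|`, `e y = eⁿ y` is a sum over the `n`-tuples with product `y`, on
which `η = twistedShift y ^ d ^ φ n` acts with `ℓ`-power order. A fixed tuple would make
`y ^ d ^ φ n` an `n`-th power, hence `ℓ`-regular, so the sum vanishes modulo `ℓ`. -/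
theorem coeff_eq_zero_of_prime_dvd_orderOf [CommSemiring k] [Finite H] {ℓ : ℕ}
    [hℓ : Fact ℓ.Prime] [CharP k ℓ] {e : MonoidAlgebra k H}
    (hc : e ∈ Subalgebra.center k (MonoidAlgebra k H)) (hid : IsIdempotentElem e) {y : H}
    (hy : ℓ ∣ orderOf y) : e.coeff y = 0 := by
  classical
  have := Fintype.ofFinite H
  set v := (Nat.card H).factorization ℓ
  set n := ℓ ^ v
  set d := ordCompl[ℓ] (Nat.card H)
  have hnd : n * d = Nat.card H := Nat.ordProj_mul_ordCompl_eq_self _ _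
  have hd : ¬ ℓ ∣ d := Nat.not_dvd_ordCompl hℓ.out Nat.card_pos.ne'
  have : NeZero n := ⟨(pow_pos hℓ.out.pos _).ne'⟩
  obtain ⟨s, hs⟩ := Nat.exists_pow_totient_eq_one_add_mul
    ((Nat.coprime_comm.mp (hℓ.out.coprime_iff_not_dvd.mpr hd)).pow_right v)
    (Nat.ordCompl_pos ℓ Nat.card_pos.ne')
  set η : Equiv.Perm (Fin n → H) := twistedShiftPerm y ^ (d ^ φ n)
  have hη : η ^ ℓ ^ (v + v) = 1 := by
    have hyc : y ^ (d ^ φ n * n) = 1 := orderOf_dvd_iff_pow_eq_one.mp <|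
      (orderOf_dvd_natCard y).trans (hnd ▸ mul_comm n d ▸
        mul_dvd_mul_right (dvd_pow_self d (Nat.totient_pos.mpr (NeZero.pos n)).ne') n)
    rw [← pow_mul, show d ^ φ n * ℓ ^ (v + v) = n * (d ^ φ n * n) by rw [pow_add]; ring,
      twistedShiftPerm_pow_mul_eq_one hyc]
  rw [← hid.pow_eq (NeZero.ne n), coeff_pow_eq_sum]
  set F : (Fin n → H) → k := fun σ => if (List.ofFn σ).prod = y then ∏ i, e.coeff (σ i) else 0
  refine Equiv.Perm.sum_eq_zero_of_pow_eq_one hη (fun σ => ?_) fun σ hσ => ?_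
  · rw [show η = twistedShiftPerm y ^ ((d ^ φ n : ℕ) : ℤ) from (zpow_natCast _ _).symm]
    refine Equiv.Perm.apply_zpow_apply_eq (f := F) (fun τ => ?_) _ σ
    simp only [F, twistedShiftPerm, Equiv.coe_fn_mk, prod_ofFn_twistedShift_eq_iff,
      prod_twistedShift (coeff_conj_eq_of_mem_center hc)]
  · have hfix : (twistedShift y)^[1 + n * s] σ = σ := by
      rw [← hs, ← coe_twistedShiftPerm_pow]
      exact hσ
    refine if_neg fun hprod =>
      hd (hℓ.out.dvd_of_dvd_pow (n := φ n + 1) (hy.trans (orderOf_dvd_of_pow_eq_one ?_)))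
    rw [pow_succ, pow_mul, hs, ← pow_eq_of_iterate_twistedShift_eq_self hfix hprod, ← pow_mul,
      hnd, pow_card_eq_one']

theorem coeff_mul_eq_of_eqOn_centralizer [CommRing k] [Fintype H] {ℓ : ℕ} [Fact ℓ.Prime]
    [CharP k ℓ] {D : Subgroup H} (hD : IsPGroup ℓ D) {a b b' : MonoidAlgebra k H}
    (ha : a ∈ Subalgebra.center k _) (hb : b ∈ Subalgebra.center k _)
    (hb' : b' ∈ Subalgebra.center k _)
    (hbb' : ∀ u ∈ Subgroup.centralizer (D : Set H), b.coeff u = b'.coeff u)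
    {x : H} (hx : x ∈ Subgroup.centralizer (D : Set H)) :
    (a * b).coeff x = (a * b').coeff x := by
  let _ : MulAction D H := MulAction.compHom H (MulAut.conj.comp D.subtype)
  have hsmul (g : D) (u : H) : g • u = g * u * (g : H)⁻¹ := rfl
  rw [← sub_eq_zero, coeff_mul_eq_sum, coeff_mul_eq_sum, ← Finset.sum_sub_distrib]
  refine hD.sum_eq_zero_of_forall_fixedPoints (fun g u => ?_) fun u hu => ?_
  · have hgx : (g : H) * x * (g : H)⁻¹ = x := by
      rw [Subgroup.mem_centralizer_iff.mp hx g g.2, mul_inv_cancel_right]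
    have hconj : ((g : H) * u * (g : H)⁻¹)⁻¹ * x = g * (u⁻¹ * x) * (g : H)⁻¹ := by
      conv_lhs => rw [← hgx]
      group
    simp only [hsmul, hconj, coeff_conj_eq_of_mem_center ha, coeff_conj_eq_of_mem_center hb,
      coeff_conj_eq_of_mem_center hb']
  · have hu' : u ∈ Subgroup.centralizer (D : Set H) :=
      Subgroup.mem_centralizer_iff.mpr fun g hg => mul_inv_eq_iff_eq_mul.mp (hu ⟨g, hg⟩)
    rw [hbb' _ (mul_mem (inv_mem hu') hx), sub_self]

end MonoidAlgebra

open MonoidAlgebra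

section Blocks

variable {k H : Type} [Field k] [Group H] {e f : MonoidAlgebra k H}

theorem IsBlockIdem.mul_eq_zero_of_ne (he : IsBlockIdem k H e) (hf : IsBlockIdem k H f)
    (hne : e ≠ f) : e * f = 0 := by
  have hcomm : Commute e f := ((Subalgebra.mem_center_iff.mp he.1) f).symm
  have hcen : e * f ∈ Subalgebra.center k _ := Subalgebra.mul_mem _ he.1 hf.1
  have hidem : IsIdempotentElem (e * f) := IsIdempotentElem.mul_of_commute hcomm he.2.1 hf.2.1
  have hle : e * (e * f) = e * f := by rw [← mul_assoc, he.2.1]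
  have hlf : f * (e * f) = e * f := by rw [← mul_assoc, ← hcomm.eq, mul_assoc, hf.2.1]
  rcases he.2.2.2 _ hcen hidem hle with h | hee
  · exact h
  rcases hf.2.2.2 _ hcen hidem hlf with h | hff
  · exact h
  exact absurd (hee.symm.trans hff) hne

theorem IsBlockIdem.domCongr (he : IsBlockIdem k H e) (ψ : H ≃* H) :
    IsBlockIdem k H (MonoidAlgebra.domCongr k k ψ e) := by
  obtain ⟨hcen, hidem, hne, hprim⟩ := he
  refine ⟨domCongr_mem_center hcen ψ, IsIdempotentElem.map hidem _, by simpa using hne,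
    fun f hf hfid hef => ?_⟩
  have hback := hprim (MonoidAlgebra.domCongr k k ψ.symm f) (domCongr_mem_center hf ψ.symm)
    (IsIdempotentElem.map hfid _)
    (by simpa [← domCongr_symm] using congrArg (MonoidAlgebra.domCongr k k ψ).symm hef)
  simpa [← domCongr_symm, AlgEquiv.symm_apply_eq] using hback

variable [Finite H] {ℓ : ℕ} [Fact ℓ.Prime] [CharP k ℓ]

theorem IsBlockIdem.eq_of_coeff_eq_on_regular_centralizer (he : IsBlockIdem k H e)
    (hf : IsBlockIdem k H f) {D : Subgroup H} (hD : IsPGroup ℓ D) (hbr : BrauerNonzero D e)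
    (hfe : ∀ x ∈ Subgroup.centralizer (D : Set H), ¬ ℓ ∣ orderOf x → f.coeff x = e.coeff x) :
    f = e := by
  have := Fintype.ofFinite H
  have hagree (x : H) (hx : x ∈ Subgroup.centralizer (D : Set H)) : e.coeff x = f.coeff x := by
    by_cases hℓx : ℓ ∣ orderOf x
    · rw [coeff_eq_zero_of_prime_dvd_orderOf he.1 he.2.1 hℓx,
        coeff_eq_zero_of_prime_dvd_orderOf hf.1 hf.2.1 hℓx]
    · exact (hfe x hx hℓx).symm
  by_contra hne
  obtain ⟨x, hx, hex⟩ := hbr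
  refine hex ?_
  calc e.coeff x = (e * e).coeff x := by rw [he.2.1]
    _ = (e * f).coeff x := coeff_mul_eq_of_eqOn_centralizer hD he.1 he.1 hf.1 hagree hx
    _ = 0 := by rw [he.mul_eq_zero_of_ne hf (Ne.symm hne), coeff_zero, Finsupp.zero_apply]

end Blocks

section Conjugation

variable {k Gt : Type} [Field k] [Group Gt] {J : Subgroup Gt} [J.Normal] {e : MonoidAlgebra k J}

theorem conjBlock_eq_domCongr (g : Gt) :
    conjBlock J g e = MonoidAlgebra.domCongr k k (MulAut.conjNormal g) e := by
  ext x : 2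
  rw [coeff_domCongr]
  exact Finsupp.mapDomain_equiv_apply (f := (MulAut.conjNormal g).toEquiv) e.coeff x

theorem domCongr_conjNormal_eq_self_of_mem (he : e ∈ Subalgebra.center k _) {g : Gt}
    (hg : g ∈ J) : MonoidAlgebra.domCongr k k (MulAut.conjNormal g) e = e := by
  have hconj : MulAut.conjNormal g = MulAut.conj (⟨g, hg⟩ : J) := by
    ext
    simp
  rw [hconj, domCongr_conj_eq_self he]

variable [Finite Gt] {ℓ : ℕ} [Fact ℓ.Prime] [CharP k ℓ]

theorem IsBlockIdem.domCongr_conjNormal_eq_self (he : IsBlockIdem k J e) {D : Subgroup J}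
    (hD : IsPGroup ℓ D) (hbr : BrauerNonzero D e) {c : Gt}
    (hc : ∀ w ∈ Subgroup.centralizer (D : Set J), ¬ ℓ ∣ orderOf w → (w : Gt) * c = c * w) :
    MonoidAlgebra.domCongr k k (MulAut.conjNormal c) e = e := by
  refine he.eq_of_coeff_eq_on_regular_centralizer (he.domCongr _) hD hbr fun w hw hreg => ?_
  rw [coeff_domCongr]
  congr 1
  ext
  rw [MulAut.conjNormal_symm_apply, mul_assoc, hc w hw hreg, inv_mul_cancel_left]

end Conjugation

theorem block_stable_of_centralizer_cover_general {Gt : Type} [Group Gt] [Finite Gt]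
    {k : Type} [Field k] (ℓ : ℕ) [Fact ℓ.Prime] [CharP k ℓ]
    (J G : Subgroup Gt) [J.Normal] (hGJ : G ≤ J)
    (e : MonoidAlgebra k ↥J) (he : IsBlockIdem k ↥J e)
    (D : Subgroup ↥J) (hD : IsDefectGroup ℓ e D)
    (hhyp : Subgroup.centralizer
        {x : Gt | x ∈ Subgroup.centralizer ((D.map J.subtype : Subgroup Gt) : Set Gt) ⊓ J
          ∧ ¬ ℓ ∣ orderOf x} ⊔ G = ⊤) :
    ∀ g : Gt, conjBlock J g e = e := by
  let conjAut : Gt →* (MonoidAlgebra k J ≃ₐ[k] MonoidAlgebra k J) :=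
    (MonoidAlgebra.domCongrAut (R := k) (A := k)).comp MulAut.conjNormal
  suffices hle : Subgroup.centralizer
      {x : Gt | x ∈ Subgroup.centralizer ((D.map J.subtype : Subgroup Gt) : Set Gt) ⊓ J
        ∧ ¬ ℓ ∣ orderOf x} ⊔ G ≤ (MulAction.stabilizer _ e).comap conjAut by
    intro g
    simpa [conjBlock_eq_domCongr, conjAut] using hle (hhyp ▸ Subgroup.mem_top g)
  refine sup_le (fun c hc => ?_) fun g hg => domCongr_conjNormal_eq_self_of_mem he.1 (hGJ hg)
  refine he.domCongr_conjNormal_eq_self hD.1 hD.2.1 fun w hw hreg =>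
    Subgroup.mem_centralizer_iff.mp hc w ⟨⟨?_, w.2⟩, by rwa [Subgroup.orderOf_coe]⟩
  rintro _ ⟨d, hd, rfl⟩
  exact congrArg Subtype.val (Subgroup.mem_centralizer_iff.mp hw d hd)

/-- Let `J ⊴ G̃`, `G ≤ J` with `G ⊴ G̃`, `ℓ` a prime, `B` an `ℓ`-block of `J` with defect
group `D`. If `C_{G̃}(C_J(D)_{ℓ'}) · G = G̃`, where `C_J(D)_{ℓ'}` denotes the set of
`ℓ`-regular elements of `C_J(D)`, then `B` is `G̃`-stable: `B^g = B` for all `g ∈ G̃`. -/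
theorem block_stable_of_centralizer_cover {Gt : Type} [Group Gt] [Finite Gt]
    {k : Type} [Field k] [IsAlgClosed k] (ℓ : ℕ) [Fact ℓ.Prime] [CharP k ℓ]
    (J G : Subgroup Gt) [J.Normal] [G.Normal] (hGJ : G ≤ J)
    (e : MonoidAlgebra k ↥J) (he : IsBlockIdem k ↥J e)
    (D : Subgroup ↥J) (hD : IsDefectGroup ℓ e D)
    (hhyp : Subgroup.centralizer
        {x : Gt | x ∈ Subgroup.centralizer ((D.map J.subtype : Subgroup Gt) : Set Gt) ⊓ J
          ∧ ¬ ℓ ∣ orderOf x} ⊔ G = ⊤) :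
    ∀ g : Gt, conjBlock J g e = e :=
  block_stable_of_centralizer_cover_general ℓ J G hGJ e he D hD hhyp
end
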